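/- arXiv:2511.08783 — 2 statements merged into one kernel-verified Lean document; each statement's English description precedes it below -/
import Mathlib

section
/- The twisted Gauss sum g(k, mn) for coprime moduli factors as g(k, mn) = χ_m(n) χ_n(m) g(k, m) g(k, n). -/
open Complex

/-- `ω = e^{2πi/3}`, a primitive third root of unity. -/
noncomputable def ω : ℂ := Complex.exp (2 * Real.pi * Complex.I / 3)

/-- The ring of Eisenstein integers `ℤ[ω]`, realized as a subalgebra of `ℂ`. -/
noncomputable def Eisen : Subalgebra ℤ ℂ := Algebra.adjoin ℤ ({ω} : Set ℂ)

/-- The norm `N(z) = z·conj z` of an Eisenstein integer, as a natural number. -/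
noncomputable def NE (z : Eisen) : ℕ := ⌊Complex.normSq (z : ℂ)⌋₊

/-- The exponential `e(z) = exp(2πi(z + conj z)) = exp(2πi·Tr_{ℂ/ℝ}(z))`. -/
noncomputable def eFun (z : ℂ) : ℂ :=
  Complex.exp (2 * Real.pi * Complex.I * (z + (starRingEnd ℂ) z))

/-- `R` is a complete residue system modulo `n` in `ℤ[ω]`. -/
def IsCRS (n : Eisen) (R : Finset Eisen) : Prop :=
  ∀ x : Eisen, ∃! r : Eisen, r ∈ R ∧ n ∣ (x - r)

/-- `χ` is the family of cubic residue symbols: `χ n r = (r/n)₃`.  It is multiplicative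
in the modulus, trivial for unit moduli, and for a prime modulus `p` it is the cubic
residue symbol: `χ p r = 0` iff `p ∣ r`, otherwise `χ p r` is a cube root of unity with
`χ p r ≡ r^{(N(p)-1)/3} (mod p)`. -/
def IsCubicFamily (χ : Eisen → Eisen → Eisen) : Prop :=
  (∀ m n r : Eisen, χ (m * n) r = χ m r * χ n r) ∧
  (∀ u r : Eisen, IsUnit u → χ u r = 1) ∧
  (∀ p : Eisen, Prime p → ∀ r : Eisen,
    (p ∣ r → χ p r = 0) ∧
    (¬ p ∣ r → (χ p r) ^ 3 = 1 ∧ p ∣ (χ p r - r ^ ((NE p - 1) / 3))))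

/-- The generalized cubic Gauss sum `g(k, n) = ∑_{r mod n} χ_n(r) e(kr/n)`,
computed with respect to a complete residue system `R` modulo `n`. -/
noncomputable def gSum (χ : Eisen → Eisen → Eisen) (k n : Eisen) (R : Finset Eisen) : ℂ :=
  ∑ r ∈ R, (χ n r : ℂ) * eFun ((k : ℂ) * (r : ℂ) / (n : ℂ))

/-!
Since `m, n ≡ 1 (mod 3)` are prime to `3`, `χ_m` and `χ_n` are periodic and completely
multiplicative in the argument. This goes prime by prime, which is legitimate because `ℤ[ω]` is
Euclidean for the norm, hence a UFD: for a prime `p ∤ 3`, `χ_p(r)` is the unique cube root of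
unity congruent to `r^{(N p - 1)/3}`, since distinct cube roots of unity differ by a divisor
of `3`. By the Chinese remainder theorem `a n + b m` runs over the residues modulo `mn` as
`(a, b)` runs over residues modulo `m` and `n`, and then
`χ_{mn}(a n + b m) = χ_m(n) χ_m(a) · χ_n(m) χ_n(b)` while
`e(k (a n + b m) / (m n)) = e(k a / m) e(k b / n)`.
-/

theorem eq_of_dvd_sub_of_pow_three_eq_one {R : Type*} [CommRing R] [IsDomain R] {p ζ ξ : R}
    (hp : ¬ p ∣ 3) (hζ : ζ ^ 3 = 1) (hξ : ξ ^ 3 = 1) (h : p ∣ ζ - ξ) : ζ = ξ := by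
  by_contra hne
  have hsum : ζ ^ 2 + ζ * ξ + ξ ^ 2 = 0 := by
    refine (mul_eq_zero.mp ?_).resolve_left (sub_ne_zero.mpr hne)
    linear_combination hζ - hξ
  -- `(ζ - ξ)² = -3ζξ`, and `ζξ` is a unit with inverse `(ζξ)²`
  exact hp (h.trans ⟨-(ζ - ξ) * ζ ^ 2 * ξ ^ 2, by
    linear_combination ζ ^ 2 * ξ ^ 2 * hsum - 3 * ξ ^ 3 * hζ - 3 * hξ⟩)

theorem isCoprime_of_dvd_sub_one {R : Type*} [CommRing R] {m c : R} (h : c ∣ m - 1) :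
    IsCoprime m c := by
  obtain ⟨t, ht⟩ := h
  rw [sub_eq_iff_eq_add'.mp ht]
  exact isCoprime_one_left.add_mul_left_left t

theorem induction_on_isCoprime {R : Type*} [CommRing R] [IsDomain R] [UniqueFactorizationMonoid R]
    {c : R} (hc : ¬ IsUnit c) {P : R → Prop} (unit : ∀ u, IsUnit u → P u)
    (prime_mul : ∀ p a, Prime p → ¬ p ∣ c → P a → P (p * a)) {m : R} (hm : IsCoprime m c) :
    P m := by
  induction m using UniqueFactorizationMonoid.induction_on_prime with
  | h₁ => exact absurd (isCoprime_zero_left.mp hm) hc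
  | h₂ u hu => exact unit u hu
  | h₃ a p _ hp ih =>
    refine prime_mul p a hp (fun hpc => hp.not_isUnit ?_) (ih hm.of_mul_left_right)
    exact hm.isUnit_of_dvd' (dvd_mul_right p a) hpc

theorem isPrimitiveRoot_omega : IsPrimitiveRoot ω 3 := by
  simpa [ω] using Complex.isPrimitiveRoot_exp 3 (by norm_num)

theorem omega_pow_three : ω ^ 3 = 1 := isPrimitiveRoot_omega.pow_eq_one

theorem omega_sq_add_omega_add_one : ω ^ 2 + ω + 1 = 0 := by
  have h := isPrimitiveRoot_omega.geom_sum_eq_zero (by norm_num)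
  simp only [Finset.sum_range_succ, Finset.sum_range_zero, pow_zero, pow_one] at h
  linear_combination h

theorem conj_omega : (starRingEnd ℂ) ω = -1 - ω := by
  rw [← Complex.inv_eq_conj (isPrimitiveRoot_omega.norm'_eq_one (by norm_num))]
  refine inv_eq_of_mul_eq_one_right ?_
  linear_combination omega_pow_three - ω * omega_sq_add_omega_add_one

theorem normSq_add_mul_omega (a b : ℝ) : normSq (a + b * ω) = a ^ 2 - a * b + b ^ 2 := by
  apply Complex.ofReal_injective
  rw [Complex.normSq_eq_conj_mul_self, map_add, map_mul, conj_ofReal, conj_ofReal, conj_omega]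
  push_cast
  linear_combination (-(b ^ 2) * ω : ℂ) * omega_sq_add_omega_add_one + (b ^ 2 : ℂ) * omega_pow_three

theorem mem_Eisen_iff {z : ℂ} : z ∈ Eisen ↔ ∃ a b : ℤ, z = a + b * ω := by
  constructor
  · intro hz
    induction hz using Algebra.adjoin_induction with
    | mem x hx => exact ⟨0, 1, by simp [Set.mem_singleton_iff.mp hx]⟩
    | algebraMap r => exact ⟨r, 0, by simp⟩
    | add x y _ _ ihx ihy =>
      obtain ⟨a, b, rfl⟩ := ihx
      obtain ⟨c, d, rfl⟩ := ihy
      exact ⟨a + c, b + d, by push_cast; ring⟩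
    | mul x y _ _ ihx ihy =>
      obtain ⟨a, b, rfl⟩ := ihx
      obtain ⟨c, d, rfl⟩ := ihy
      exact ⟨a * c - b * d, a * d + b * c - b * d, by
        push_cast; linear_combination (b * d : ℂ) * omega_sq_add_omega_add_one⟩
  · rintro ⟨a, b, rfl⟩
    have hω : ω ∈ Eisen := Algebra.subset_adjoin rfl
    exact add_mem (intCast_mem Eisen a) (mul_mem (intCast_mem Eisen b) hω)

theorem conj_mem_Eisen (z : Eisen) : (starRingEnd ℂ) z ∈ Eisen := by
  obtain ⟨a, b, h⟩ := mem_Eisen_iff.mp z.2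
  refine mem_Eisen_iff.mpr ⟨a - b, -b, ?_⟩
  rw [h, map_add, map_mul, map_intCast, map_intCast, conj_omega]
  push_cast; ring

theorem NE_cast (z : Eisen) : (NE z : ℝ) = normSq z := by
  obtain ⟨a, b, h⟩ := mem_Eisen_iff.mp z.2
  have hnonneg : 0 ≤ a ^ 2 - a * b + b ^ 2 := by nlinarith [sq_nonneg (a - b)]
  lift a ^ 2 - a * b + b ^ 2 to ℕ using hnonneg with N hN
  have hnorm := normSq_add_mul_omega a b
  have hN' : (N : ℝ) = a ^ 2 - a * b + b ^ 2 := by exact_mod_cast hN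
  push_cast at hnorm
  rw [NE, h, hnorm, ← hN', Nat.floor_natCast]

theorem NE_lt_NE_iff {z w : Eisen} : NE z < NE w ↔ normSq z < normSq w := by
  rw [← NE_cast, ← NE_cast, Nat.cast_lt]

theorem not_isUnit_three : ¬ IsUnit (3 : Eisen) := by
  rintro ⟨u, hu⟩
  have h : normSq ((3 : Eisen) : ℂ) * NE ((u⁻¹ : Eisenˣ) : Eisen) = 1 := by
    rw [NE_cast, ← normSq_mul, ← Subalgebra.coe_mul, ← hu, u.mul_inv]; simp
  have h9 : normSq ((3 : Eisen) : ℂ) = 9 := by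
    rw [show ((3 : Eisen) : ℂ) = 3 from rfl, normSq_ofNat]; norm_num
  rw [h9] at h
  have : 9 * NE ((u⁻¹ : Eisenˣ) : Eisen) = 1 := by exact_mod_cast h
  omega

theorem ne_zero_of_isCoprime_three {z : Eisen} (hz : IsCoprime z 3) : z ≠ 0 := by
  rintro rfl
  exact not_isUnit_three (isCoprime_zero_left.mp hz)

theorem exists_normSq_sub_mul_lt (x : Eisen) {y : Eisen} (hy : y ≠ 0) :
    ∃ q : Eisen, normSq ((x - y * q : Eisen) : ℂ) < normSq y := by
  obtain ⟨A, B, hAB⟩ := mem_Eisen_iff.mp (mul_mem x.2 (conj_mem_Eisen y))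
  have hy0 : (y : ℂ) ≠ 0 := fun h => hy (Subtype.ext h)
  set N := normSq (y : ℂ)
  have hN : 0 < N := normSq_pos.mpr hy0
  set s : ℝ := A / N
  set t : ℝ := B / N
  -- `x / y = s + t ω`, and `q` rounds both coordinates
  obtain ⟨q, hq⟩ : ∃ q : Eisen, (q : ℂ) = round s + round t * ω :=
    ⟨⟨_, mem_Eisen_iff.mpr ⟨_, _, rfl⟩⟩, rfl⟩
  refine ⟨q, ?_⟩
  have hxy : (x : ℂ) = y * (s + t * ω) := by
    have hyy : (y : ℂ) * (starRingEnd ℂ) y = N := Complex.mul_conj _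
    have hN' : (N : ℂ) ≠ 0 := by exact_mod_cast hN.ne'
    simp only [s, t]; push_cast
    field_simp
    linear_combination (y : ℂ) * hAB - (x : ℂ) * hyy
  have hdiff : ((x - y * q : Eisen) : ℂ) =
      y * (((s - round s : ℝ) : ℂ) + ((t - round t : ℝ) : ℂ) * ω) := by
    simp only [Subalgebra.coe_sub, Subalgebra.coe_mul, hxy, hq]
    push_cast
    ring
  rw [hdiff, normSq_mul, normSq_add_mul_omega]
  obtain ⟨hs₁, hs₂⟩ := abs_le.mp (abs_sub_round s)
  obtain ⟨ht₁, ht₂⟩ := abs_le.mp (abs_sub_round t)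
  have hlt : (s - round s) ^ 2 - (s - round s) * (t - round t) + (t - round t) ^ 2 < 1 := by
    nlinarith
  simpa using mul_lt_mul_of_pos_left hlt hN

instance : IsPrincipalIdealRing Eisen where
  principal I := by
    by_cases hI : I = ⊥
    · exact hI ▸ bot_isPrincipal
    obtain ⟨y, ⟨hyI, hy⟩, hmin⟩ := (measure NE).wf.has_min {y | y ∈ I ∧ y ≠ 0}
      (Submodule.exists_mem_ne_zero_of_ne_bot hI)
    refine ⟨y, le_antisymm (fun x hx => ?_) ((Ideal.span_singleton_le_iff_mem I).mpr hyI)⟩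
    obtain ⟨q, hq⟩ := exists_normSq_sub_mul_lt x hy
    have hrem : x - y * q = 0 := by
      by_contra hne
      exact hmin _ ⟨I.sub_mem hx (I.mul_mem_right q hyI), hne⟩ (NE_lt_NE_iff.mpr hq)
    exact Submodule.mem_span_singleton.mpr
      ⟨q, by rw [smul_eq_mul, mul_comm, ← sub_eq_zero.mp hrem]⟩

section IsCubicFamily

variable {χ : Eisen → Eisen → Eisen}

theorem IsCubicFamily.congr_of_prime (hχ : IsCubicFamily χ) {p r r' : Eisen} (hp : Prime p)
    (hp3 : ¬ p ∣ 3) (h : p ∣ r - r') : χ p r = χ p r' := by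
  obtain ⟨-, -, hχp⟩ := hχ
  by_cases hr : p ∣ r
  · have hr' : p ∣ r' := by simpa using dvd_sub hr h
    rw [(hχp p hp r).1 hr, (hχp p hp r').1 hr']
  have hr' : ¬ p ∣ r' := fun hr' => hr (by simpa using dvd_add h hr')
  obtain ⟨h3, hpow⟩ := (hχp p hp r).2 hr
  obtain ⟨h3', hpow'⟩ := (hχp p hp r').2 hr'
  refine eq_of_dvd_sub_of_pow_three_eq_one hp3 h3 h3' ?_
  have := (dvd_sub hpow hpow').add (h.trans (sub_dvd_pow_sub_pow r r' ((NE p - 1) / 3)))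
  convert this using 1
  ring

theorem IsCubicFamily.map_mul_of_prime (hχ : IsCubicFamily χ) {p : Eisen} (hp : Prime p)
    (hp3 : ¬ p ∣ 3) (a b : Eisen) : χ p (a * b) = χ p a * χ p b := by
  obtain ⟨-, -, hχp⟩ := hχ
  by_cases ha : p ∣ a
  · rw [(hχp p hp a).1 ha, (hχp p hp _).1 (ha.mul_right b), zero_mul]
  by_cases hb : p ∣ b
  · rw [(hχp p hp b).1 hb, (hχp p hp _).1 (hb.mul_left a), mul_zero]
  have hab : ¬ p ∣ a * b := fun h => (hp.dvd_or_dvd h).elim ha hb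
  obtain ⟨h3, hpow⟩ := (hχp p hp _).2 hab
  obtain ⟨ha3, hapow⟩ := (hχp p hp a).2 ha
  obtain ⟨hb3, hbpow⟩ := (hχp p hp b).2 hb
  refine eq_of_dvd_sub_of_pow_three_eq_one hp3 h3 (by rw [mul_pow, ha3, hb3, one_mul]) ?_
  have := (hpow.sub (hapow.mul_right (χ p b))).sub (hbpow.mul_left (a ^ ((NE p - 1) / 3)))
  convert this using 1
  ring

theorem IsCubicFamily.congr (hχ : IsCubicFamily χ) {m r r' : Eisen} (hm : IsCoprime m 3)
    (h : m ∣ r - r') : χ m r = χ m r' := by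
  revert h
  refine induction_on_isCoprime not_isUnit_three (P := fun m => m ∣ r - r' → χ m r = χ m r')
    (fun u hu _ => by rw [hχ.2.1 u r hu, hχ.2.1 u r' hu]) (fun p a hp hp3 ih h => ?_) hm
  rw [hχ.1, hχ.1, hχ.congr_of_prime hp hp3 ((dvd_mul_right p a).trans h),
    ih ((dvd_mul_left a p).trans h)]

theorem IsCubicFamily.map_mul (hχ : IsCubicFamily χ) {m : Eisen} (hm : IsCoprime m 3)
    (a b : Eisen) : χ m (a * b) = χ m a * χ m b := by
  refine induction_on_isCoprime not_isUnit_three (P := fun m => χ m (a * b) = χ m a * χ m b)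
    (fun u hu => by rw [hχ.2.1 u _ hu, hχ.2.1 u _ hu, hχ.2.1 u _ hu, one_mul])
    (fun p a' hp hp3 ih => ?_) hm
  rw [hχ.1, hχ.1, hχ.1, hχ.map_mul_of_prime hp hp3, ih]
  ring

end IsCubicFamily

theorem eFun_add (z w : ℂ) : eFun (z + w) = eFun z * eFun w := by
  rw [eFun, eFun, eFun, ← Complex.exp_add, map_add]
  ring_nf

theorem eFun_coe_Eisen (z : Eisen) : eFun z = 1 := by
  obtain ⟨a, b, h⟩ := mem_Eisen_iff.mp z.2
  have htrace : (z : ℂ) + (starRingEnd ℂ) z = ((2 * a - b : ℤ) : ℂ) := by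
    rw [h, map_add, map_mul, map_intCast, map_intCast, conj_omega]
    push_cast
    ring
  rw [eFun, htrace, mul_comm]
  exact Complex.exp_int_mul_two_pi_mul_I _

theorem eFun_mul_div_congr (k : Eisen) {N r r' : Eisen} (hN : (N : ℂ) ≠ 0) (h : N ∣ r - r') :
    eFun (k * r / N) = eFun (k * r' / N) := by
  obtain ⟨t, ht⟩ := h
  have hr : (r : ℂ) = r' + N * t := by
    rw [← Subalgebra.coe_mul, ← ht]; push_cast; ring
  have hsplit : (k * r / N : ℂ) = k * r' / N + ((k * t : Eisen) : ℂ) := by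
    rw [hr]; push_cast; field_simp
  rw [hsplit, eFun_add, eFun_coe_Eisen, mul_one]

theorem IsCRS.eq_of_dvd_sub {n : Eisen} {R : Finset Eisen} (hR : IsCRS n R) {a b : Eisen}
    (ha : a ∈ R) (hb : b ∈ R) (h : n ∣ a - b) : a = b :=
  (hR a).unique ⟨ha, by simp⟩ ⟨hb, h⟩

theorem IsCRS.sum_eq {M : Type*} [AddCommMonoid M] {n : Eisen} {R : Finset Eisen}
    (hR : IsCRS n R) {ι : Type*} {s : Finset ι} {f : ι → Eisen}
    (hf : ∀ x, ∃! i, i ∈ s ∧ n ∣ x - f i) {F : Eisen → M}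
    (hF : ∀ r r', n ∣ r - r' → F r = F r') :
    ∑ r ∈ R, F r = ∑ i ∈ s, F (f i) := by
  choose rep hrep using fun x => (hR x).exists
  refine (Finset.sum_bij (fun i _ => rep (f i)) (fun i _ => (hrep _).1) ?_ ?_ ?_).symm
  · intro i hi j hj hij
    refine (hf (f i)).unique ⟨hi, by simp⟩ ⟨hj, ?_⟩
    have := dvd_sub (hrep (f i)).2 (hrep (f j)).2
    rwa [hij, sub_sub_sub_cancel_right] at this
  · intro r hr
    obtain ⟨i, ⟨hi, hdvd⟩, -⟩ := hf r
    refine ⟨i, hi, hR.eq_of_dvd_sub (hrep _).1 hr ?_⟩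
    have := dvd_add (hrep (f i)).2 hdvd
    rw [← dvd_neg]; convert this using 1; ring
  · exact fun i _ => hF _ _ (hrep (f i)).2

theorem IsCRS.existsUnique_mul_add_mul {m n : Eisen} (hmn : IsCoprime m n) {Rm Rn : Finset Eisen}
    (hRm : IsCRS m Rm) (hRn : IsCRS n Rn) (x : Eisen) :
    ∃! p : Eisen × Eisen, p ∈ Rm ×ˢ Rn ∧ m * n ∣ x - (p.1 * n + p.2 * m) := by
  obtain ⟨u, v, huv⟩ := id hmn
  obtain ⟨a, ⟨ha, hxa⟩, -⟩ := hRm (x * v)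
  obtain ⟨b, ⟨hb, hxb⟩, -⟩ := hRn (x * u)
  have hdvd : m * n ∣ x - (a * n + b * m) := by
    rw [show x - (a * n + b * m) = (x * v - a) * n + (x * u - b) * m by
      linear_combination x * huv.symm]
    exact hmn.mul_dvd ((hxa.mul_right n).add (dvd_mul_left m _))
      ((dvd_mul_left n _).add (hxb.mul_right m))
  refine ⟨(a, b), ⟨Finset.mem_product.mpr ⟨ha, hb⟩, hdvd⟩, ?_⟩
  rintro ⟨a', b'⟩ ⟨hmem, hdvd'⟩
  rw [Finset.mem_product] at hmem
  have hd : m * n ∣ (a' - a) * n + (b' - b) * m := by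
    convert dvd_sub hdvd hdvd' using 1
    ring
  have hma : m ∣ (a' - a) * n :=
    (dvd_add_left (dvd_mul_left m _)).mp ((dvd_mul_right m n).trans hd)
  have hnb : n ∣ (b' - b) * m :=
    (dvd_add_right (dvd_mul_left n _)).mp ((dvd_mul_left n m).trans hd)
  rw [Prod.mk.injEq]
  exact ⟨hRm.eq_of_dvd_sub hmem.1 ha (hmn.dvd_of_dvd_mul_right hma),
    hRn.eq_of_dvd_sub hmem.2 hb (hmn.symm.dvd_of_dvd_mul_right hnb)⟩

/-- For coprime moduli `m, n ≡ 1 (mod 3)`, the twisted Gauss sum factors as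
`g(k, mn) = χ_m(n) χ_n(m) g(k, m) g(k, n)`. -/
theorem gSum_mul (χ : Eisen → Eisen → Eisen) (hχ : IsCubicFamily χ)
    (k m n : Eisen) (hmn : IsCoprime m n)
    (hm1 : (3 : Eisen) ∣ m - 1) (hn1 : (3 : Eisen) ∣ n - 1)
    (R Rm Rn : Finset Eisen)
    (hR : IsCRS (m * n) R) (hRm : IsCRS m Rm) (hRn : IsCRS n Rn) :
    gSum χ k (m * n) R =
      ((χ m n : Eisen) : ℂ) * ((χ n m : Eisen) : ℂ) * gSum χ k m Rm * gSum χ k n Rn := by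
  have hm3 : IsCoprime m 3 := isCoprime_of_dvd_sub_one hm1
  have hn3 : IsCoprime n 3 := isCoprime_of_dvd_sub_one hn1
  have hne (z : Eisen) (hz : IsCoprime z 3) : (z : ℂ) ≠ 0 := by
    exact_mod_cast ne_zero_of_isCoprime_three hz
  have hterm (a b : Eisen) :
      (χ (m * n) (a * n + b * m) : ℂ) * eFun (k * (a * n + b * m : Eisen) / (m * n : Eisen)) =
        χ m n * χ n m * ((χ m a) * eFun (k * a / m) * ((χ n b) * eFun (k * b / n))) := by
    have hχm : χ m (a * n + b * m) = χ m n * χ m a := by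
      rw [hχ.congr hm3 (show m ∣ _ - n * a from ⟨b, by ring⟩), hχ.map_mul hm3]
    have hχn : χ n (a * n + b * m) = χ n m * χ n b := by
      rw [hχ.congr hn3 (show n ∣ _ - m * b from ⟨a, by ring⟩), hχ.map_mul hn3]
    have he : (k * (a * n + b * m : Eisen) / (m * n : Eisen) : ℂ) = k * a / m + k * b / n := by
      have := hne m hm3
      have := hne n hn3
      push_cast
      field_simp
    rw [hχ.1, hχm, hχn, he, eFun_add]
    push_cast
    ring
  rw [gSum, hR.sum_eq (hRm.existsUnique_mul_add_mul hmn hRn)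
    (F := fun r => (χ (m * n) r : ℂ) * eFun (k * r / (m * n : Eisen)))
    (fun r r' h => by rw [hχ.congr (hm3.mul_left hn3) h,
      eFun_mul_div_congr k (hne _ (hm3.mul_left hn3)) h]),
    Finset.sum_product, gSum, gSum, mul_assoc, Finset.sum_mul_sum, Finset.mul_sum]
  refine Finset.sum_congr rfl fun a _ => ?_
  rw [Finset.mul_sum]
  exact Finset.sum_congr rfl fun b _ => hterm a b
end

section
/- For every y > 0 and every real t ≠ 0, the average (1/y) ∫_y^{2y} (sin(πtu)/(πtu))² du is bounded below by a positive absolute constant times min{1, 1/(t y)²}. -/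
/-!
Write `s = π t`. If `|t| y ≤ 3/8`, then `|s u| ≤ 3π/4` on `[y, 2y]`, and concavity of `sin` on
`[0, π]` gives `|sin x| ≥ |x| / 5` there, so the integrand is at least `1/25`. Otherwise bound the
denominator by `(2 s y)²` and use `∫_y^{2y} sin² (s u) du ≥ y/2 - 1/(2|s|) ≥ y/18`, the last step
because `|s| y > 3π/8 > 9/8`.
-/

open Real intervalIntegral

namespace Real

lemma sin_div_mul_le_sin {a x : ℝ} (hx : 0 ≤ x) (hxa : x ≤ a) (ha : a ≤ π) :
    sin a / a * x ≤ sin x := by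
  rcases hx.eq_or_lt with rfl | hx0
  · simp
  have ha0 : 0 < a := hx0.trans_le hxa
  have := strictConcaveOn_sin_Icc.concaveOn.2 (⟨le_rfl, pi_pos.le⟩ : (0 : ℝ) ∈ Set.Icc 0 π)
    ⟨ha0.le, ha⟩ (sub_nonneg.2 ((div_le_one ha0).2 hxa)) (div_nonneg hx ha0.le)
    (sub_add_cancel 1 (x / a))
  simp only [sin_zero, smul_eq_mul, mul_zero, zero_add] at this
  rw [div_mul_cancel₀ x ha0.ne'] at this
  calc sin a / a * x = sin a * (x / a) := by ring
    _ ≤ sin x := by linarith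

lemma div_five_le_sin {x : ℝ} (hx₀ : 0 ≤ x) (hx : x ≤ 3 * π / 4) : x / 5 ≤ sin x := by
  have hsin : sin (3 * π / 4) = √2 / 2 := by
    rw [show 3 * π / 4 = π - π / 4 by ring, sin_pi_sub, sin_pi_div_four]
  have hslope : 1 / 5 ≤ sin (3 * π / 4) / (3 * π / 4) := by
    rw [hsin, le_div_iff₀ (by positivity)]
    nlinarith [pi_lt_four, lt_sqrt (x := 1.4) (y := 2) (by norm_num) |>.2 (by norm_num)]
  calc x / 5 = 1 / 5 * x := by ring
    _ ≤ sin (3 * π / 4) / (3 * π / 4) * x := by gcongr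
    _ ≤ sin x := sin_div_mul_le_sin hx₀ hx (by linarith [pi_pos])

lemma sq_div_25_le_sin_sq {x : ℝ} (hx : |x| ≤ 3 * π / 4) : x ^ 2 / 25 ≤ sin x ^ 2 := by
  rcases le_total 0 x with h | h
  · have := div_five_le_sin h (abs_of_nonneg h ▸ hx)
    nlinarith
  · have := div_five_le_sin (neg_nonneg.2 h) (abs_of_nonpos h ▸ hx)
    rw [sin_neg] at this
    nlinarith

lemma abs_sin_mul_cos_le_half (x : ℝ) : |sin x * cos x| ≤ 1 / 2 := by
  have := abs_sin_le_one (2 * x)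
  rw [sin_two_mul, mul_assoc, abs_mul, abs_two] at this
  linarith

end Real

section

variable {s a b : ℝ}

theorem integral_sin_mul_sq (hs : s ≠ 0) :
    ∫ u in a..b, sin (s * u) ^ 2 =
      (b - a) / 2 + (sin (s * a) * cos (s * a) - sin (s * b) * cos (s * b)) / (2 * s) := by
  rw [integral_comp_mul_left (fun x => sin x ^ 2) hs, integral_sin_sq, smul_eq_mul]
  field_simp
  ring

theorem sub_le_integral_sin_mul_sq (hs : s ≠ 0) :
    (b - a) / 2 - 1 / (2 * |s|) ≤ ∫ u in a..b, sin (s * u) ^ 2 := by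
  have hsc : |sin (s * a) * cos (s * a) - sin (s * b) * cos (s * b)| ≤ 1 :=
    (abs_sub _ _).trans (by linarith [abs_sin_mul_cos_le_half (s * a),
      abs_sin_mul_cos_le_half (s * b)])
  have hrem : |(sin (s * a) * cos (s * a) - sin (s * b) * cos (s * b)) / (2 * s)| ≤
      1 / (2 * |s|) := by
    rw [abs_div, abs_mul, abs_two]
    gcongr
  rw [integral_sin_mul_sq hs]
  linarith [neg_abs_le ((sin (s * a) * cos (s * a) - sin (s * b) * cos (s * b)) / (2 * s))]

theorem intervalIntegrable_sin_mul_div_sq (s a b : ℝ) :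
    IntervalIntegrable (fun u => (sin (s * u) / (s * u)) ^ 2) MeasureTheory.volume a b := by
  refine (intervalIntegrable_const (c := (1 : ℝ))).mono_fun ?_ ?_
  · exact (by fun_prop : Measurable _).aestronglyMeasurable
  · refine Filter.Eventually.of_forall fun u => ?_
    dsimp only
    rw [norm_one, Real.norm_eq_abs, abs_of_nonneg (by positivity), div_pow]
    exact div_le_one_of_le₀ sin_sq_le_sq (sq_nonneg _)

theorem sub_div_25_le_integral_sin_mul_div_sq (ha : 0 < a) (hab : a ≤ b) (hs : s ≠ 0)
    (hsb : |s| * b ≤ 3 * π / 4) :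
    (b - a) / 25 ≤ ∫ u in a..b, (sin (s * u) / (s * u)) ^ 2 := by
  have hpt : ∀ u ∈ Set.Icc a b, 1 / 25 ≤ (sin (s * u) / (s * u)) ^ 2 := by
    intro u ⟨hau, hub⟩
    have hsu : s * u ≠ 0 := mul_ne_zero hs (ha.trans_le hau).ne'
    have hle : |s * u| ≤ 3 * π / 4 := by
      rw [abs_mul, abs_of_pos (ha.trans_le hau)]
      exact (mul_le_mul_of_nonneg_left hub (abs_nonneg s)).trans hsb
    rw [div_pow, le_div_iff₀ (by positivity)]
    linarith [sq_div_25_le_sin_sq hle]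
  have := integral_mono_on hab intervalIntegrable_const
    (intervalIntegrable_sin_mul_div_sq s a b) hpt
  rwa [integral_const, smul_eq_mul, mul_one_div] at this

theorem sub_div_sq_le_integral_sin_mul_div_sq (ha : 0 < a) (hab : a ≤ b) (hs : s ≠ 0) :
    ((b - a) / 2 - 1 / (2 * |s|)) / (s * b) ^ 2 ≤
      ∫ u in a..b, (sin (s * u) / (s * u)) ^ 2 := by
  have hpt : ∀ u ∈ Set.Icc a b, sin (s * u) ^ 2 / (s * b) ^ 2 ≤ (sin (s * u) / (s * u)) ^ 2 := by
    intro u ⟨hau, hub⟩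
    have hu : 0 < u := ha.trans_le hau
    rw [div_pow]
    refine div_le_div_of_nonneg_left (sq_nonneg _) (by positivity) ?_
    rw [mul_pow, mul_pow]
    gcongr
  calc ((b - a) / 2 - 1 / (2 * |s|)) / (s * b) ^ 2
      ≤ (∫ u in a..b, sin (s * u) ^ 2) / (s * b) ^ 2 := by
        gcongr; exact sub_le_integral_sin_mul_sq hs
    _ = ∫ u in a..b, sin (s * u) ^ 2 / (s * b) ^ 2 := (intervalIntegral.integral_div _ _).symm
    _ ≤ _ := integral_mono_on hab ((by fun_prop : Continuous _).intervalIntegrable a b)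
        (intervalIntegrable_sin_mul_div_sq s a b) hpt

end

/-- There is a positive absolute constant `c` such that for every `y > 0` and every
real `t ≠ 0`, the average `(1/y) ∫_y^{2y} (sin(πtu)/(πtu))² du` is at least
`c · min{1, 1/(ty)²}`. -/
theorem fejer_average_lower_bound :
    ∃ c : ℝ, 0 < c ∧ ∀ y t : ℝ, 0 < y → t ≠ 0 →
      c * min 1 (1 / (t * y) ^ 2) ≤
        (1 / y) * ∫ u in y..(2 * y), (Real.sin (Real.pi * t * u) / (Real.pi * t * u)) ^ 2 := by
  refine ⟨1 / (72 * π ^ 2), by positivity, fun y t hy ht => ?_⟩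
  have hs : π * t ≠ 0 := mul_ne_zero pi_ne_zero ht
  have habs : |π * t| = π * |t| := by rw [abs_mul, abs_of_pos pi_pos]
  rw [one_div_mul_eq_div y, le_div_iff₀ hy]
  rcases le_or_gt (|t| * y) (3 / 8) with hsmall | hlarge
  · have hint := sub_div_25_le_integral_sin_mul_div_sq hy (b := 2 * y) (by linarith) hs
      (by rw [habs]; nlinarith [pi_pos])
    have hc : 1 / (72 * π ^ 2) ≤ 1 / 25 := by
      gcongr; nlinarith [pi_gt_three]
    calc 1 / (72 * π ^ 2) * min 1 (1 / (t * y) ^ 2) * y ≤ 1 / 25 * 1 * y := by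
          gcongr; exact min_le_left _ _
      _ = (2 * y - y) / 25 := by ring
      _ ≤ _ := hint
  · have hint := sub_div_sq_le_integral_sin_mul_div_sq hy (b := 2 * y) (by linarith) hs
    have htail : 1 / (2 * |π * t|) ≤ 4 * y / 9 := by
      rw [habs, div_le_div_iff₀ (by positivity) (by norm_num)]
      nlinarith [pi_gt_three]
    calc 1 / (72 * π ^ 2) * min 1 (1 / (t * y) ^ 2) * y
        ≤ 1 / (72 * π ^ 2) * (1 / (t * y) ^ 2) * y := by gcongr; exact min_le_right _ _
      _ = (y / 18) / (π * t * (2 * y)) ^ 2 := by field_simp; ring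
      _ ≤ ((2 * y - y) / 2 - 1 / (2 * |π * t|)) / (π * t * (2 * y)) ^ 2 := by
          gcongr; linarith
      _ ≤ _ := hint
end
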